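/- For two intervals I = [a,b] and J = [c,d] in ℝ, the interval modules k_I and k_J are ε-interleaved whenever max(|a−c|, |b−d|) ≤ ε. -/

import Mathlib

open CategoryTheory
open Classical

set_option maxHeartbeats 1000000

/-- The interval persistence module `k_I`: it is `k` at indices `r ∈ I` (realized as the
submodule `⊤ ≤ k`), `0` elsewhere (the submodule `⊥`), with identity structure maps
between indices of `I` and zero maps otherwise. -/
noncomputable def intervalModule (k : Type) [Field k] (I : Set ℝ) (hI : I.OrdConnected) :
    ℝ ⥤ ModuleCat k where
  obj r := ModuleCat.of k ↥(if r ∈ I then (⊤ : Submodule k k) else ⊥)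
  map {r s} h := ModuleCat.ofHom
    { toFun := fun x => ⟨if r ∈ I ∧ s ∈ I then (x : k) else 0, by
        by_cases hs : r ∈ I ∧ s ∈ I
        · simp [hs, hs.2]
        · rw [if_neg hs]; exact Submodule.zero_mem _⟩
      map_add' := fun x y => by
        apply Subtype.ext
        by_cases hs : r ∈ I ∧ s ∈ I <;> simp [hs]
      map_smul' := fun c x => by
        apply Subtype.ext
        by_cases hs : r ∈ I ∧ s ∈ I <;> simp [hs] }
  map_id r := by
    apply ModuleCat.hom_ext
    apply LinearMap.ext
    intro x
    apply Subtype.ext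
    show (if r ∈ I ∧ r ∈ I then x.1 else 0) = x.1
    by_cases hr : r ∈ I
    · simp [hr]
    · have h2 := x.2
      simp only [hr, if_false] at h2
      have hx : x.1 = 0 := (Submodule.mem_bot k).mp h2
      simp [hr, hx]
  map_comp {r s t} h₁ h₂ := by
    apply ModuleCat.hom_ext
    apply LinearMap.ext
    intro x
    apply Subtype.ext
    show (if r ∈ I ∧ t ∈ I then x.1 else 0)
        = (if s ∈ I ∧ t ∈ I then (if r ∈ I ∧ s ∈ I then x.1 else 0) else 0)
    by_cases hrt : r ∈ I ∧ t ∈ I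
    · have hs : s ∈ I := hI.out hrt.1 hrt.2 ⟨leOfHom h₁, leOfHom h₂⟩
      simp [hrt.1, hrt.2, hs]
    · by_cases hrs : r ∈ I ∧ s ∈ I
      · have hst : ¬(s ∈ I ∧ t ∈ I) := fun h => hrt ⟨hrs.1, h.2⟩
        simp [hrs, hst, hrt]
      · simp [hrs, hrt]

/-- An ε-interleaving between persistence modules `M N : ℝ ⥤ ModuleCat k`. -/
structure Interleaving {k : Type} [Field k] (M N : ℝ ⥤ ModuleCat k) (ε : ℝ) where
  nonneg : 0 ≤ ε
  f : ∀ r : ℝ, M.obj r ⟶ N.obj (r + ε)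
  g : ∀ r : ℝ, N.obj r ⟶ M.obj (r + ε)
  nat_f : ∀ r s : ℝ, (h : r ≤ s) →
    M.map (homOfLE h) ≫ f s = f r ≫ N.map (homOfLE (by linarith : r + ε ≤ s + ε))
  nat_g : ∀ r s : ℝ, (h : r ≤ s) →
    N.map (homOfLE h) ≫ g s = g r ≫ M.map (homOfLE (by linarith : r + ε ≤ s + ε))
  gf : ∀ r : ℝ, f r ≫ g (r + ε) = M.map (homOfLE (by linarith : r ≤ r + ε + ε))
  fg : ∀ r : ℝ, g r ≫ f (r + ε) = N.map (homOfLE (by linarith : r ≤ r + ε + ε))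


/-- Auxiliary morphism between conditional one-dimensional modules. -/
@[reducible] noncomputable def condHom (k : Type) [Field k] (P Q : Prop) :
    ModuleCat.of k ↥(if P then (⊤ : Submodule k k) else ⊥) ⟶
      ModuleCat.of k ↥(if Q then (⊤ : Submodule k k) else ⊥) :=
  ModuleCat.ofHom
    { toFun := fun x => ⟨if P ∧ Q then (x : k) else 0, by
        by_cases hs : P ∧ Q
        · simp [hs, hs.2]
        · rw [if_neg hs]; exact Submodule.zero_mem _⟩
      map_add' := fun x y => by
        apply Subtype.ext
        by_cases hs : P ∧ Q <;> simp [hs]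
      map_smul' := fun c x => by
        apply Subtype.ext
        by_cases hs : P ∧ Q <;> simp [hs] }

lemma condHom_val {k : Type} [Field k] (P Q : Prop)
    (x : ↥(if P then (⊤ : Submodule k k) else ⊥)) :
    (condHom k P Q x).1 = if P ∧ Q then x.1 else 0 := rfl

lemma condHom_comp_eq (k : Type) [Field k] (P Q Q' R : Prop)
    (h : P → (Q ∧ R ↔ Q' ∧ R)) :
    condHom k P Q ≫ condHom k Q R = condHom k P Q' ≫ condHom k Q' R := by
  apply ModuleCat.hom_ext
  apply LinearMap.ext
  intro x
  apply Subtype.ext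
  show (if Q ∧ R then (if P ∧ Q then x.1 else 0) else 0)
      = (if Q' ∧ R then (if P ∧ Q' then x.1 else 0) else 0)
  by_cases hP : P
  · by_cases hQR : Q ∧ R
    · have hQ'R : Q' ∧ R := (h hP).mp hQR
      simp [hQR, hQ'R, hP, hQR.1, hQ'R.1]
    · have hn : ¬ (Q' ∧ R) := fun hh => hQR ((h hP).mpr hh)
      simp [hQR, hn]
  · have hx : x.1 = 0 := by
      have h2 := x.2
      simp only [hP, if_false] at h2
      exact (Submodule.mem_bot k).mp h2
    simp [hx]

lemma condHom_comp_eq_single (k : Type) [Field k] (P Q R : Prop)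
    (h : P → R → Q) :
    condHom k P Q ≫ condHom k Q R = condHom k P R := by
  apply ModuleCat.hom_ext
  apply LinearMap.ext
  intro x
  apply Subtype.ext
  show (if Q ∧ R then (if P ∧ Q then x.1 else 0) else 0) = (if P ∧ R then x.1 else 0)
  by_cases hP : P
  · by_cases hR : R
    · have hQ := h hP hR
      simp [hP, hQ, hR]
    · have h1 : ¬ (Q ∧ R) := fun hh => hR hh.2
      have h2 : ¬ (P ∧ R) := fun hh => hR hh.2
      simp [h1, h2]
  · have hx : x.1 = 0 := by
      have h2 := x.2
      simp only [hP, if_false] at h2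
      exact (Submodule.mem_bot k).mp h2
    have h2 : ¬ (P ∧ R) := fun hh => hP hh.1
    simp [hx, h2]

/-- Interval modules on `[a,b]` and `[c,d]` are ε-interleaved as soon as
`max (|a-c|) (|b-d|) ≤ ε`. -/
theorem intervalModule_interleaved (k : Type) [Field k] (a b c d ε : ℝ)
    (h : max |a - c| |b - d| ≤ ε) :
    Nonempty (Interleaving (intervalModule k (Set.Icc a b) Set.ordConnected_Icc)
      (intervalModule k (Set.Icc c d) Set.ordConnected_Icc) ε) := by
  have hac : |a - c| ≤ ε := le_trans (le_max_left _ _) h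
  have hbd : |b - d| ≤ ε := le_trans (le_max_right _ _) h
  have hε : 0 ≤ ε := le_trans (abs_nonneg _) hac
  obtain ⟨hac1, hac2⟩ := abs_le.mp hac
  obtain ⟨hbd1, hbd2⟩ := abs_le.mp hbd
  refine ⟨{
    nonneg := hε
    f := fun r => condHom k (r ∈ Set.Icc a b) (r + ε ∈ Set.Icc c d)
    g := fun r => condHom k (r ∈ Set.Icc c d) (r + ε ∈ Set.Icc a b)
    nat_f := ?_, nat_g := ?_, gf := ?_, fg := ?_ }⟩
  · intro r s hrs
    show condHom k (r ∈ Set.Icc a b) (s ∈ Set.Icc a b)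
          ≫ condHom k (s ∈ Set.Icc a b) (s + ε ∈ Set.Icc c d)
        = condHom k (r ∈ Set.Icc a b) (r + ε ∈ Set.Icc c d)
          ≫ condHom k (r + ε ∈ Set.Icc c d) (s + ε ∈ Set.Icc c d)
    apply condHom_comp_eq
    intro hr
    obtain ⟨hr1, hr2⟩ := Set.mem_Icc.mp hr
    simp only [Set.mem_Icc]
    constructor
    · rintro ⟨⟨h1, h2⟩, h3, h4⟩
      exact ⟨⟨by linarith, by linarith⟩, h3, h4⟩
    · rintro ⟨⟨h1, h2⟩, h3, h4⟩
      exact ⟨⟨by linarith, by linarith⟩, h3, h4⟩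
  · intro r s hrs
    show condHom k (r ∈ Set.Icc c d) (s ∈ Set.Icc c d)
          ≫ condHom k (s ∈ Set.Icc c d) (s + ε ∈ Set.Icc a b)
        = condHom k (r ∈ Set.Icc c d) (r + ε ∈ Set.Icc a b)
          ≫ condHom k (r + ε ∈ Set.Icc a b) (s + ε ∈ Set.Icc a b)
    apply condHom_comp_eq
    intro hr
    obtain ⟨hr1, hr2⟩ := Set.mem_Icc.mp hr
    simp only [Set.mem_Icc]
    constructor
    · rintro ⟨⟨h1, h2⟩, h3, h4⟩
      exact ⟨⟨by linarith, by linarith⟩, h3, h4⟩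
    · rintro ⟨⟨h1, h2⟩, h3, h4⟩
      exact ⟨⟨by linarith, by linarith⟩, h3, h4⟩
  · intro r
    show condHom k (r ∈ Set.Icc a b) (r + ε ∈ Set.Icc c d)
          ≫ condHom k (r + ε ∈ Set.Icc c d) (r + ε + ε ∈ Set.Icc a b)
        = condHom k (r ∈ Set.Icc a b) (r + ε + ε ∈ Set.Icc a b)
    apply condHom_comp_eq_single
    intro h1 h2
    obtain ⟨h1a, h1b⟩ := Set.mem_Icc.mp h1
    obtain ⟨h2a, h2b⟩ := Set.mem_Icc.mp h2
    exact Set.mem_Icc.mpr ⟨by linarith, by linarith⟩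
  · intro r
    show condHom k (r ∈ Set.Icc c d) (r + ε ∈ Set.Icc a b)
          ≫ condHom k (r + ε ∈ Set.Icc a b) (r + ε + ε ∈ Set.Icc c d)
        = condHom k (r ∈ Set.Icc c d) (r + ε + ε ∈ Set.Icc c d)
    apply condHom_comp_eq_single
    intro h1 h2
    obtain ⟨h1a, h1b⟩ := Set.mem_Icc.mp h1
    obtain ⟨h2a, h2b⟩ := Set.mem_Icc.mp h2
    exact Set.mem_Icc.mpr ⟨by linarith, by linarith⟩
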